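/- arXiv:1807.09376 — 2 statements merged into one kernel-verified Lean document; each statement's English description precedes it below -/
import Mathlib

section
/- Every graph F on 3t vertices admits a red-blue edge colouring with no red induced path P_4 and no blue induced matching of t edges; hence IR(P_4, tK_2) ≥ 3t + 1. -/
open SimpleGraph

/-- The disjoint union of `s` copies of the graph `G`. -/
def SimpleGraph.Copies {β : Type*} (s : ℕ) (G : SimpleGraph β) :
    SimpleGraph (Fin s × β) where
  Adj x y := x.1 = y.1 ∧ G.Adj x.2 y.2
  symm := ⟨fun x y h => ⟨h.1.symm, h.2.symm⟩⟩
  loopless := ⟨fun x h => G.loopless.irrefl x.2 h.2⟩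

/-- `F` strongly arrows `(G, H)`: every red-blue (`true`/`false`) colouring of the
edges of `F` yields a red induced copy of `G` or a blue induced copy of `H`. -/
def StronglyArrows {α β γ : Type*}
    (F : SimpleGraph α) (G : SimpleGraph β) (H : SimpleGraph γ) : Prop :=
  ∀ c : Sym2 α → Bool,
    (∃ f : G ↪g F, ∀ a b : β, G.Adj a b → c s(f a, f b) = true) ∨
    (∃ f : H ↪g F, ∀ a b : γ, H.Adj a b → c s(f a, f b) = false)

/-- The induced Ramsey number `IR(G, H)`. -/
noncomputable def IR {β γ : Type*} (G : SimpleGraph β) (H : SimpleGraph γ) : ℕ :=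
  sInf {n : ℕ | ∃ F : SimpleGraph (Fin n), StronglyArrows F G H}

/-- The single-edge graph `K_2`. -/
def K2 : SimpleGraph (Fin 2) := ⊤

/-- Two disjoint edges `2K_2`. -/
def twoK2 : SimpleGraph (Fin 2 × Fin 2) := SimpleGraph.Copies 2 K2


/-!
Colour inductively on a vertex set `s`, keeping out red paths with three edges and keeping every
nonempty blue induced matching `P` below `3|P| < |s|`. Sets of at most three vertices are
coloured all red. If some vertex `w` has all its neighbours in `s` on an edge `ab`, colour every
edge meeting `{w, a, b}` blue and recurse on the rest: an induced matching has at most one edge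
meeting `{w, a, b}`. Otherwise colour a maximum matching `M` red and the other edges blue. Every
blue induced edge gets its endpoints and their `M`-partners, at least three vertices, and these
sets are disjoint. If the count were tight, a neighbour of a free vertex would give an augmenting
path of length three.

For the bound on `IR`, `t` disjoint copies of `P_4` arrow `(P_4, tK_2)`: a colouring has either
an entirely red copy or a blue edge in every copy.
-/

open Finset

namespace SimpleGraph

variable {V : Type*} {G : SimpleGraph V} {s : Finset V} {M P : Finset (Sym2 V)}

structure IsEdgeMatching (G : SimpleGraph V) (M : Finset (Sym2 V)) : Prop where
  mem_edgeSet : ∀ e ∈ M, e ∈ G.edgeSet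
  eq_of_mem : ∀ e ∈ M, ∀ f ∈ M, ∀ x ∈ e, x ∈ f → e = f

structure IsInducedMatching (G : SimpleGraph V) (M : Finset (Sym2 V)) : Prop
    extends G.IsEdgeMatching M where
  eq_of_adj : ∀ e ∈ M, ∀ f ∈ M, ∀ x ∈ e, ∀ y ∈ f, G.Adj x y → e = f

namespace IsEdgeMatching

theorem mono {N : Finset (Sym2 V)} (hM : G.IsEdgeMatching M) (hN : N ⊆ M) :
    G.IsEdgeMatching N :=
  ⟨fun e he => hM.mem_edgeSet e (hN he), fun e he f hf => hM.eq_of_mem e (hN he) f (hN hf)⟩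

theorem eq_of_mk_mem (hM : G.IsEdgeMatching M) {x y z : V} (hy : s(x, y) ∈ M)
    (hz : s(x, z) ∈ M) : y = z :=
  Sym2.congr_right.mp <| hM.eq_of_mem _ hy _ hz x (Sym2.mem_mk_left x y) (Sym2.mem_mk_left x z)

theorem eq_or_adj_of_partners (hM : G.IsEdgeMatching M) {v x y : V}
    (hx : v = x ∨ s(x, v) ∈ M) (hy : v = y ∨ s(y, v) ∈ M) : x = y ∨ G.Adj x y := by
  rcases hx with rfl | hx <;> rcases hy with rfl | hy
  · exact .inl rfl
  · exact .inr (hM.mem_edgeSet _ hy).symm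
  · exact .inr (hM.mem_edgeSet _ hx)
  · rw [Sym2.eq_swap] at hx hy
    exact .inl (hM.eq_of_mk_mem hx hy)

theorem insert_mk [DecidableEq V] (hM : G.IsEdgeMatching M) {x y : V} (hxy : G.Adj x y)
    (hx : ∀ e ∈ M, x ∉ e) (hy : ∀ e ∈ M, y ∉ e) : G.IsEdgeMatching (insert s(x, y) M) := by
  have hfree : ∀ e ∈ M, ∀ z ∈ s(x, y), z ∉ e := by
    intro e he z hz
    rcases Sym2.mem_iff.mp hz with rfl | rfl
    exacts [hx e he, hy e he]
  refine ⟨?_, ?_⟩ <;> simp only [mem_insert, forall_eq_or_imp]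
  exacts [⟨hxy, hM.mem_edgeSet⟩,
    ⟨⟨fun _ _ _ => trivial, fun f hf z hz hzf => (hfree f hf z hz hzf).elim⟩,
      fun e he => ⟨fun z hze hz => (hfree e he z hz hze).elim, hM.eq_of_mem e he⟩⟩]

theorem augment [DecidableEq V] (hM : G.IsEdgeMatching M) {u v x z : V} (hxv : s(x, v) ∈ M)
    (huv : G.Adj u v) (hxz : G.Adj x z) (hu : ∀ e ∈ M, u ∉ e) (hz : ∀ e ∈ M, z ∉ e)
    (huz : u ≠ z) : G.IsEdgeMatching (insert s(u, v) (insert s(x, z) (M.erase s(x, v)))) := by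
  have hM₁ : G.IsEdgeMatching (M.erase s(x, v)) := hM.mono (erase_subset _ _)
  have hx₁ : ∀ e ∈ M.erase s(x, v), x ∉ e := fun e he hxe =>
    (mem_erase.mp he).1 (hM.eq_of_mem _ (mem_of_mem_erase he) _ hxv x hxe (Sym2.mem_mk_left x v))
  have hv₁ : ∀ e ∈ M.erase s(x, v), v ∉ e := fun e he hve =>
    (mem_erase.mp he).1 (hM.eq_of_mem _ (mem_of_mem_erase he) _ hxv v hve (Sym2.mem_mk_right x v))
  have hvx : v ≠ x := (hM.mem_edgeSet _ hxv).ne'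
  have hvz : v ≠ z := fun h => hz _ hxv (h ▸ Sym2.mem_mk_right x v)
  have hux : u ≠ x := fun h => hu _ hxv (h ▸ Sym2.mem_mk_left x v)
  refine (hM₁.insert_mk hxz hx₁ fun e he => hz e (mem_of_mem_erase he)).insert_mk huv ?_ ?_ <;>
    simp only [mem_insert, forall_eq_or_imp, Sym2.mem_iff, not_or]
  exacts [⟨⟨hux, huz⟩, fun e he => hu e (mem_of_mem_erase he)⟩, ⟨⟨hvx, hvz⟩, hv₁⟩]

end IsEdgeMatching

namespace IsInducedMatching

theorem mono {Q : Finset (Sym2 V)} (hP : G.IsInducedMatching P) (hQ : Q ⊆ P) :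
    G.IsInducedMatching Q :=
  ⟨hP.toIsEdgeMatching.mono hQ, fun e he f hf => hP.eq_of_adj e (hQ he) f (hQ hf)⟩

theorem eq_of_eq_or_adj (hP : G.IsInducedMatching P) {e f : Sym2 V} (he : e ∈ P) (hf : f ∈ P)
    {x y : V} (hx : x ∈ e) (hy : y ∈ f) (hxy : x = y ∨ G.Adj x y) : e = f := by
  rcases hxy with rfl | hxy
  exacts [hP.eq_of_mem e he f hf x hx hy, hP.eq_of_adj e he f hf x hx y hy hxy]

end IsInducedMatching

structure IsMaxMatchingOn (G : SimpleGraph V) (s : Finset V) (M : Finset (Sym2 V)) : Prop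
    extends G.IsEdgeMatching M where
  subset_sym2 : M ⊆ s.sym2
  card_le : ∀ N, G.IsEdgeMatching N → N ⊆ s.sym2 → #N ≤ #M

theorem exists_isMaxMatchingOn (G : SimpleGraph V) (s : Finset V) :
    ∃ M, G.IsMaxMatchingOn s M := by
  classical
  obtain ⟨M, hM, hmax⟩ := exists_max_image (s.sym2.powerset.filter G.IsEdgeMatching) card
    ⟨∅, mem_filter.mpr ⟨empty_mem_powerset _, ⟨by simp, by simp⟩⟩⟩
  rw [mem_filter, mem_powerset] at hM
  exact ⟨M, hM.2, hM.1, fun N hN hNs => hmax N (mem_filter.mpr ⟨mem_powerset.mpr hNs, hN⟩)⟩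

namespace IsMaxMatchingOn

variable [DecidableEq V]

theorem not_adj (hM : G.IsMaxMatchingOn s M) {x y : V} (hx : x ∈ s) (hy : y ∈ s)
    (hxM : ∀ e ∈ M, x ∉ e) (hyM : ∀ e ∈ M, y ∉ e) : ¬ G.Adj x y := fun hxy => by
  have hnew : s(x, y) ∉ M := fun h => hxM _ h (Sym2.mem_mk_left x y)
  have := hM.card_le _ (hM.insert_mk hxy hxM hyM)
    (insert_subset (mk_mem_sym2_iff.mpr ⟨hx, hy⟩) hM.subset_sym2)
  rw [card_insert_of_notMem hnew] at this
  omega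

theorem exists_partner_of_adj (hM : G.IsMaxMatchingOn s M) {x y : V} (hx : x ∈ s) (hy : y ∈ s)
    (hxy : G.Adj x y) (hxM : ∀ e ∈ M, x ∉ e) : ∃ d, s(y, d) ∈ M := by
  by_contra! hyM
  refine hM.not_adj hx hy hxM (fun e he hye => ?_) hxy
  obtain ⟨d, rfl⟩ := Sym2.mem_iff_exists.mp hye
  exact hyM d he

theorem not_augmenting (hM : G.IsMaxMatchingOn s M) {u v x z : V} (hus : u ∈ s) (hzs : z ∈ s)
    (hxv : s(x, v) ∈ M) (huv : G.Adj u v) (hxz : G.Adj x z) (hu : ∀ e ∈ M, u ∉ e)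
    (hz : ∀ e ∈ M, z ∉ e) (huz : u ≠ z) : False := by
  have hxs := mk_mem_sym2_iff.mp (hM.subset_sym2 hxv)
  have hnew₁ : s(u, v) ∉ insert s(x, z) (M.erase s(x, v)) := by
    simp only [mem_insert, Sym2.eq_iff, not_or]
    exact ⟨⟨fun h => hu _ hxv (h.1 ▸ Sym2.mem_mk_left x v), fun h => huz h.1⟩,
      fun h => hu _ (mem_of_mem_erase h) (Sym2.mem_mk_left u v)⟩
  have hnew₂ : s(x, z) ∉ M.erase s(x, v) := fun h =>
    hz _ (mem_of_mem_erase h) (Sym2.mem_mk_right x z)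
  have := hM.card_le _ (hM.augment hxv huv hxz hu hz huz) <| by
    simp only [insert_subset_iff, mk_mem_sym2_iff]
    exact ⟨⟨hus, hxs.2⟩, ⟨hxs.1, hzs⟩, (erase_subset _ _).trans hM.subset_sym2⟩
  rw [card_insert_of_notMem hnew₁, card_insert_of_notMem hnew₂, card_erase_of_mem hxv] at this
  have := card_pos.mpr ⟨_, hxv⟩
  omega

end IsMaxMatchingOn

structure IsGoodColouring (G : SimpleGraph V) (s : Finset V) (c : Sym2 V → Bool) : Prop where
  no_red_path : ∀ v₁ ∈ s, ∀ v₂ ∈ s, ∀ v₃ ∈ s, ∀ v₄ ∈ s, G.Adj v₁ v₂ → G.Adj v₂ v₃ → G.Adj v₃ v₄ →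
    v₁ ≠ v₃ → v₂ ≠ v₄ → v₁ ≠ v₄ →
    c s(v₁, v₂) = true → c s(v₂, v₃) = true → c s(v₃, v₄) = true → False
  three_mul_card_lt : ∀ P, G.IsInducedMatching P → P ⊆ s.sym2 → P.Nonempty →
    (∀ e ∈ P, c e = false) → 3 * #P < #s

theorem isGoodColouring_of_card_le_three [DecidableEq V] (hs : #s ≤ 3) :
    G.IsGoodColouring s fun _ => true where
  no_red_path v₁ h₁ v₂ h₂ v₃ h₃ v₄ h₄ h₁₂ h₂₃ h₃₄ h₁₃ h₂₄ h₁₄ _ _ _ := by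
    have hsub : {v₁, v₂, v₃, v₄} ⊆ s := by simp [insert_subset_iff, *]
    have hcard : #{v₁, v₂, v₃, v₄} = 4 := by
      simp [card_insert_of_notMem, *, h₁₂.ne, h₂₃.ne, h₃₄.ne]
    have := card_le_card hsub
    omega
  three_mul_card_lt _ _ _ := fun ⟨e, he⟩ hblue => absurd (hblue e he) (by decide)

/-- Every edge of `P` leaving `s \ {w, a, b}` meets the edge `ab`. -/
theorem IsInducedMatching.card_filter_not_mem_sym2_sdiff_le_one [DecidableEq V]
    (hP : G.IsInducedMatching P) (hPs : P ⊆ s.sym2) {w a b : V} (hab : G.Adj a b)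
    (hN : ∀ v ∈ s, G.Adj w v → v = a ∨ v = b) :
    #(P.filter (· ∉ (s \ {w, a, b}).sym2)) ≤ 1 := by
  have hmeet : ∀ e ∈ P, e ∉ (s \ {w, a, b}).sym2 → a ∈ e ∨ b ∈ e := by
    intro e he het
    obtain ⟨x, hxe, hxt⟩ : ∃ x ∈ e, x ∉ s \ {w, a, b} := by simpa [mem_sym2_iff] using het
    have hxs : x ∈ s := mem_sym2_iff.mp (hPs he) x hxe
    simp only [mem_sdiff, hxs, true_and, not_not, mem_insert, mem_singleton] at hxt
    rcases hxt with rfl | rfl | rfl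
    · obtain ⟨y, rfl⟩ := Sym2.mem_iff_exists.mp hxe
      have hy : y ∈ s := (mk_mem_sym2_iff.mp (hPs he)).2
      rcases hN y hy (hP.mem_edgeSet _ he) with rfl | rfl <;> simp
    · exact .inl hxe
    · exact .inr hxe
  refine card_le_one.mpr fun e he f hf => ?_
  rw [mem_filter] at he hf
  rcases hmeet e he.1 he.2 with hae | hbe <;> rcases hmeet f hf.1 hf.2 with haf | hbf
  exacts [hP.eq_of_eq_or_adj he.1 hf.1 hae haf (.inl rfl),
    hP.eq_of_eq_or_adj he.1 hf.1 hae hbf (.inr hab),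
    hP.eq_of_eq_or_adj he.1 hf.1 hbe haf (.inr hab.symm),
    hP.eq_of_eq_or_adj he.1 hf.1 hbe hbf (.inl rfl)]

theorem IsGoodColouring.absorb [DecidableEq V] {c : Sym2 V → Bool} {w a b : V} (hw : w ∈ s)
    (ha : a ∈ s) (hb : b ∈ s) (hab : G.Adj a b) (hwa : w ≠ a) (hwb : w ≠ b)
    (hN : ∀ v ∈ s, G.Adj w v → v = a ∨ v = b) (hs : 4 ≤ #s)
    (hc : G.IsGoodColouring (s \ {w, a, b}) c) :
    G.IsGoodColouring s fun e => c e && decide (e ∈ (s \ {w, a, b}).sym2) := by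
  set t := s \ {w, a, b}
  have hcard : #t + 3 = #s := by
    have hsub : {w, a, b} ⊆ s := by simp [insert_subset_iff, *]
    have : #{w, a, b} = 3 := by simp [card_insert_of_notMem, *, hab.ne]
    rw [card_sdiff_of_subset hsub, this]
    omega
  refine ⟨fun v₁ _ v₂ _ v₃ _ v₄ _ h₁₂ h₂₃ h₃₄ h₁₃ h₂₄ h₁₄ r₁ r₂ r₃ => ?_,
    fun P hP hPs hPne hblue => ?_⟩
  · simp only [Bool.and_eq_true, decide_eq_true_eq, mk_mem_sym2_iff] at r₁ r₂ r₃
    exact hc.no_red_path v₁ r₁.2.1 v₂ r₁.2.2 v₃ r₂.2.2 v₄ r₃.2.2 h₁₂ h₂₃ h₃₄ h₁₃ h₂₄ h₁₄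
      r₁.1 r₂.1 r₃.1
  have hout : #(P.filter (· ∉ t.sym2)) ≤ 1 :=
    hP.card_filter_not_mem_sym2_sdiff_le_one hPs hab hN
  have hsplit := card_filter_add_card_filter_not (s := P) (p := (· ∈ t.sym2))
  rcases (P.filter (· ∈ t.sym2)).eq_empty_or_nonempty with hin | hin
  · rw [hin, card_empty] at hsplit
    omega
  have := hc.three_mul_card_lt (P.filter (· ∈ t.sym2)) (hP.mono (filter_subset _ _))
    (fun e he => (mem_filter.mp he).2) hin fun e he => by
      simpa [(mem_filter.mp he).2] using hblue e (mem_filter.mp he).1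
  omega

def NoNeighbourhoodInEdge (G : SimpleGraph V) (s : Finset V) : Prop :=
  ∀ w ∈ s, ∀ a ∈ s, ∀ b ∈ s, G.Adj a b → w ≠ a → w ≠ b → ∃ v ∈ s, G.Adj w v ∧ v ≠ a ∧ v ≠ b

open Classical in
/-- The vertices charged to the edge `p` when a blue induced matching is counted against `s`. -/
noncomputable def withPartners (M : Finset (Sym2 V)) (s : Finset V) (p : Sym2 V) : Finset V :=
  s.filter fun v => ∃ x ∈ p, v = x ∨ s(x, v) ∈ M

theorem mem_withPartners {p : Sym2 V} {v : V} :
    v ∈ withPartners M s p ↔ v ∈ s ∧ ∃ x ∈ p, v = x ∨ s(x, v) ∈ M := by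
  classical
  rw [withPartners, mem_filter]

theorem IsInducedMatching.pairwiseDisjoint_withPartners (hP : G.IsInducedMatching P)
    (hM : G.IsEdgeMatching M) : (P : Set (Sym2 V)).PairwiseDisjoint (withPartners M s) := by
  intro p hp q hq hpq
  refine Finset.disjoint_left.mpr fun v hvp hvq => hpq ?_
  obtain ⟨-, x, hx, hvx⟩ := mem_withPartners.mp hvp
  obtain ⟨-, y, hy, hvy⟩ := mem_withPartners.mp hvq
  exact hP.eq_of_eq_or_adj hp hq hx hy (hM.eq_or_adj_of_partners hvx hvy)

namespace IsMaxMatchingOn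

variable [DecidableEq V]

theorem three_le_card_withPartners (hM : G.IsMaxMatchingOn s M) {x y : V} (hxy : G.Adj x y)
    (hs : s(x, y) ∈ s.sym2) (hxyM : s(x, y) ∉ M) : 3 ≤ #(withPartners M s s(x, y)) := by
  have key : ∀ {x y}, G.Adj x y → s(x, y) ∈ s.sym2 → s(x, y) ∉ M → (∃ z, s(x, z) ∈ M) →
      3 ≤ #(withPartners M s s(x, y)) := by
    rintro x y hxy hs hxyM ⟨z, hxz⟩
    rw [mk_mem_sym2_iff] at hs
    have hz : z ∈ s := (mk_mem_sym2_iff.mp (hM.subset_sym2 hxz)).2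
    have hsub : {x, y, z} ⊆ withPartners M s s(x, y) := by
      simp [insert_subset_iff, mem_withPartners, hs.1, hs.2, hz, hxz]
    have hyz : y ≠ z := by rintro rfl; exact hxyM hxz
    have hxz' : x ≠ z := (hM.mem_edgeSet _ hxz).ne
    have : #{x, y, z} = 3 := by simp [card_insert_of_notMem, *, hxy.ne]
    exact this ▸ card_le_card hsub
  rw [mk_mem_sym2_iff] at hs
  obtain ⟨z, hz⟩ | hxM := em (∃ z, s(x, z) ∈ M)
  · exact key hxy (mk_mem_sym2_iff.mpr hs) hxyM ⟨z, hz⟩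
  · rw [Sym2.eq_swap] at hxyM ⊢
    refine key hxy.symm (mk_mem_sym2_iff.mpr hs.symm) hxyM
      (hM.exists_partner_of_adj hs.1 hs.2 hxy fun e he hxe => ?_)
    obtain ⟨z, rfl⟩ := Sym2.mem_iff_exists.mp hxe
    exact hxM ⟨z, he⟩

theorem exists_free_of_card_withPartners_le_three (hM : G.IsMaxMatchingOn s M) {p : Sym2 V}
    (hp : p ∈ G.edgeSet) (hps : p ∈ s.sym2) (hpM : p ∉ M) (h3 : #(withPartners M s p) ≤ 3) :
    ∃ u c, p = s(u, c) ∧ ∀ e ∈ M, u ∉ e := by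
  by_contra! hcov
  induction p using Sym2.ind with | _ x y => ?_
  obtain ⟨_, hx'M, hxe⟩ := hcov x y rfl
  obtain ⟨x', rfl⟩ := Sym2.mem_iff_exists.mp hxe
  obtain ⟨_, hy'M, hye⟩ := hcov y x Sym2.eq_swap
  obtain ⟨y', rfl⟩ := Sym2.mem_iff_exists.mp hye
  have hs := mk_mem_sym2_iff.mp hps
  have hx's := (mk_mem_sym2_iff.mp (hM.subset_sym2 hx'M)).2
  have hy's := (mk_mem_sym2_iff.mp (hM.subset_sym2 hy'M)).2
  have hsub : {x, y, x', y'} ⊆ withPartners M s s(x, y) := by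
    simp [insert_subset_iff, mem_withPartners, *]
  have hxx' : x ≠ x' := (hM.mem_edgeSet _ hx'M).ne
  have hyy' : y ≠ y' := (hM.mem_edgeSet _ hy'M).ne
  have hyx' : y ≠ x' := by rintro rfl; exact hpM hx'M
  have hxy' : x ≠ y' := by rintro rfl; exact hpM (Sym2.eq_swap ▸ hy'M)
  have hx'y' : x' ≠ y' := by
    rintro rfl
    rw [Sym2.eq_swap] at hx'M hy'M
    exact G.ne_of_adj hp (hM.eq_of_mk_mem hx'M hy'M)
  have : #{x, y, x', y'} = 4 := by
    simp [card_insert_of_notMem, *, G.ne_of_adj hp]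
  have := card_le_card hsub
  omega

/-- Tightness forces every edge of `P` to join a free vertex to a matched one; a neighbour of a
free vertex outside its `M`-neighbourhood then yields an augmenting path of length three. -/
theorem false_of_withPartners_tight (hM : G.IsMaxMatchingOn s M)
    (hfree : G.NoNeighbourhoodInEdge s) (hP : G.IsInducedMatching P) (hPs : P ⊆ s.sym2)
    (hPM : ∀ p ∈ P, p ∉ M) (hne : P.Nonempty) (h3 : ∀ p ∈ P, #(withPartners M s p) ≤ 3)
    (hcover : ∀ v ∈ s, ∃ p ∈ P, v ∈ withPartners M s p) : False := by
  have hends : ∀ p ∈ P, ∃ u c, p = s(u, c) ∧ ∀ e ∈ M, u ∉ e := fun p hp =>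
    hM.exists_free_of_card_withPartners_le_three (hP.mem_edgeSet p hp) (hPs hp) (hPM p hp)
      (h3 p hp)
  obtain ⟨p, hp⟩ := hne
  obtain ⟨u, c, rfl, hu⟩ := hends _ hp
  have huc : G.Adj u c := hP.mem_edgeSet _ hp
  have hucs := mk_mem_sym2_iff.mp (hPs hp)
  obtain ⟨d, hcd⟩ := hM.exists_partner_of_adj hucs.1 hucs.2 huc hu
  have hds : d ∈ s := (mk_mem_sym2_iff.mp (hM.subset_sym2 hcd)).2
  have hud : u ≠ d := by rintro rfl; exact hu _ hcd (Sym2.mem_mk_right c u)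
  obtain ⟨v, hvs, huv, hvc, hvd⟩ :=
    hfree u hucs.1 c hucs.2 d hds (hM.mem_edgeSet _ hcd) huc.ne hud
  obtain ⟨q, hq, hvq⟩ := hcover v hvs
  obtain ⟨-, x, hxq, rfl | hxv⟩ := mem_withPartners.mp hvq
  · obtain rfl := hP.eq_of_adj _ hp _ hq u (Sym2.mem_mk_left u c) _ hxq huv
    rcases Sym2.mem_iff.mp hxq with rfl | rfl
    exacts [huv.ne rfl, hvc rfl]
  obtain ⟨z, x', rfl, hz⟩ := hends q hq
  obtain rfl : x = x' := by
    rcases Sym2.mem_iff.mp hxq with rfl | rfl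
    exacts [(hz _ hxv (Sym2.mem_mk_left x v)).elim, rfl]
  have hqp : s(z, x) ≠ s(u, c) := fun h => by
    rcases Sym2.mem_iff.mp (h ▸ Sym2.mem_mk_right z x) with rfl | rfl
    exacts [hu _ hxv (Sym2.mem_mk_left x v), hvd (hM.eq_of_mk_mem hxv hcd)]
  have huz : u ≠ z := fun h => hqp <|
    hP.eq_of_eq_or_adj hq hp (Sym2.mem_mk_left z x) (Sym2.mem_mk_left u c) (.inl h.symm)
  exact hM.not_augmenting hucs.1 (mk_mem_sym2_iff.mp (hPs hq)).1 hxv huv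
    (hP.mem_edgeSet _ hq).symm hu hz huz

theorem three_mul_card_lt (hM : G.IsMaxMatchingOn s M) (hfree : G.NoNeighbourhoodInEdge s)
    (hP : G.IsInducedMatching P) (hPs : P ⊆ s.sym2) (hPM : ∀ p ∈ P, p ∉ M) (hne : P.Nonempty) :
    3 * #P < #s := by
  have h3 : ∀ p ∈ P, 3 ≤ #(withPartners M s p) := fun p hp => by
    induction p using Sym2.ind with
    | _ x y => exact hM.three_le_card_withPartners (hP.mem_edgeSet _ hp) (hPs hp) (hPM _ hp)
  have hlow : #P * 3 ≤ ∑ p ∈ P, #(withPartners M s p) := by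
    simpa using card_nsmul_le_sum P _ 3 h3
  have hsum : ∑ p ∈ P, #(withPartners M s p) = #(P.biUnion (withPartners M s)) :=
    (card_biUnion (hP.pairwiseDisjoint_withPartners hM.toIsEdgeMatching)).symm
  have hsub : P.biUnion (withPartners M s) ⊆ s :=
    biUnion_subset.mpr fun _ _ _ hv => (mem_withPartners.mp hv).1
  by_contra! hle
  refine hM.false_of_withPartners_tight hfree hP hPs hPM hne (fun p hp => ?_) (fun v hv => ?_)
  · by_contra! h4
    have := sum_lt_sum h3 ⟨p, hp, h4⟩
    rw [sum_const, smul_eq_mul] at this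
    have := card_le_card hsub
    omega
  · by_contra! hv'
    have := card_lt_card <| Finset.ssubset_iff_subset_ne.mpr ⟨hsub, fun h => by
      obtain ⟨p, hp, hvp⟩ := mem_biUnion.mp (h ▸ hv)
      exact hv' p hp hvp⟩
    omega

theorem isGoodColouring (hM : G.IsMaxMatchingOn s M) (hfree : G.NoNeighbourhoodInEdge s) :
    G.IsGoodColouring s fun e => decide (e ∈ M) where
  no_red_path _ _ _ _ _ _ _ _ _ _ _ h₁₃ _ _ r₁ r₂ _ := by
    rw [decide_eq_true_eq, Sym2.eq_swap] at r₁
    exact h₁₃ (hM.eq_of_mk_mem r₁ (decide_eq_true_eq.mp r₂))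
  three_mul_card_lt _ hP hPs hne hblue :=
    hM.three_mul_card_lt hfree hP hPs (fun p hp => by simpa using hblue p hp) hne

end IsMaxMatchingOn

theorem exists_isGoodColouring (G : SimpleGraph V) (s : Finset V) :
    ∃ c, G.IsGoodColouring s c := by
  classical
  induction s using Finset.strongInduction with | H s ih => ?_
  by_cases hs : #s ≤ 3
  · exact ⟨_, isGoodColouring_of_card_le_three hs⟩
  by_cases hfree : G.NoNeighbourhoodInEdge s
  · obtain ⟨M, hM⟩ := exists_isMaxMatchingOn G s
    exact ⟨_, hM.isGoodColouring hfree⟩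
  simp only [NoNeighbourhoodInEdge, not_forall, not_exists, not_and, exists_prop] at hfree
  obtain ⟨w, hw, a, ha, b, hb, hab, hwa, hwb, hN⟩ := hfree
  obtain ⟨c, hc⟩ :=
    ih (s \ {w, a, b}) (sdiff_ssubset (by simp [insert_subset_iff, *]) (insert_nonempty _ _))
  refine ⟨_, hc.absorb hw ha hb hab hwa hwb (fun v hv hwv => ?_) (by omega)⟩
  by_contra! hvab
  exact hN v hv hwv hvab.1 hvab.2

theorem copies_K2_adj_zero_one {t : ℕ} (i : Fin t) : (Copies t K2).Adj (i, 0) (i, 1) :=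
  ⟨rfl, by simp [K2]⟩

theorem isInducedMatching_image_copies_K2 [DecidableEq V] {t : ℕ} (f : Copies t K2 ↪g G) :
    G.IsInducedMatching (univ.image fun i => s(f (i, 0), f (i, 1))) := by
  have hmem : ∀ i x, x ∈ s(f (i, 0), f (i, 1)) → ∃ k, x = f (i, k) := by
    intro i x hx
    rcases Sym2.mem_iff.mp hx with rfl | rfl
    exacts [⟨0, rfl⟩, ⟨1, rfl⟩]
  refine ⟨⟨?_, ?_⟩, ?_⟩ <;>
    simp only [mem_image, mem_univ, true_and, forall_exists_index, forall_apply_eq_imp_iff]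
  · exact fun i => f.map_rel_iff.mpr (copies_K2_adj_zero_one i)
  · intro i j x hi hj
    obtain ⟨k, rfl⟩ := hmem i x hi
    obtain ⟨l, hl⟩ := hmem j _ hj
    obtain rfl : i = j := congrArg Prod.fst (f.injective hl)
    rfl
  · intro i j x hi y hj hxy
    obtain ⟨k, rfl⟩ := hmem i x hi
    obtain ⟨l, rfl⟩ := hmem j y hj
    obtain rfl : i = j := (f.map_rel_iff.mp hxy).1
    rfl

theorem card_image_copies_K2 [DecidableEq V] {t : ℕ} (f : Copies t K2 ↪g G) :
    #(univ.image fun i => s(f (i, 0), f (i, 1))) = t := by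
  rw [card_image_of_injective, card_univ, Fintype.card_fin]
  intro i j hij
  have hmem : f (i, 0) ∈ s(f (j, 0), f (j, 1)) :=
    (show s(f (i, 0), f (i, 1)) = s(f (j, 0), f (j, 1)) from hij) ▸ Sym2.mem_mk_left _ _
  rcases Sym2.mem_iff.mp hmem with h | h <;> exact congrArg Prod.fst (f.injective h)

section Fintype

variable [Fintype V] {c : Sym2 V → Bool}

theorem IsGoodColouring.not_exists_red_pathGraph (hc : G.IsGoodColouring univ c) :
    ¬ ∃ f : pathGraph 4 ↪g G, ∀ a b, (pathGraph 4).Adj a b → c s(f a, f b) = true := by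
  rintro ⟨f, hf⟩
  have h01 : (pathGraph 4).Adj 0 1 := by simp [pathGraph_adj]
  have h12 : (pathGraph 4).Adj 1 2 := by simp [pathGraph_adj]
  have h23 : (pathGraph 4).Adj 2 3 := by simp [pathGraph_adj]
  exact hc.no_red_path _ (mem_univ _) _ (mem_univ _) _ (mem_univ _) _ (mem_univ _)
    (f.map_rel_iff.mpr h01) (f.map_rel_iff.mpr h12) (f.map_rel_iff.mpr h23)
    (f.injective.ne (by decide)) (f.injective.ne (by decide)) (f.injective.ne (by decide))
    (hf _ _ h01) (hf _ _ h12) (hf _ _ h23)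

theorem IsGoodColouring.not_exists_blue_copies_K2 [DecidableEq V] (hc : G.IsGoodColouring univ c)
    {t : ℕ} (ht : 1 ≤ t) (hV : Fintype.card V ≤ 3 * t) :
    ¬ ∃ f : Copies t K2 ↪g G, ∀ a b, (Copies t K2).Adj a b → c s(f a, f b) = false := by
  rintro ⟨f, hf⟩
  have := hc.three_mul_card_lt _ (isInducedMatching_image_copies_K2 f) (fun _ _ => by simp)
    ((univ_nonempty_iff.mpr ⟨(⟨0, ht⟩ : Fin t)⟩).image _) (by
      simp only [mem_image, mem_univ, true_and, forall_exists_index, forall_apply_eq_imp_iff]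
      exact fun i => hf _ _ (copies_K2_adj_zero_one i))
  rw [card_image_copies_K2, card_univ] at this
  omega

theorem exists_colouring_not_red_pathGraph_not_blue_copies_K2 (F : SimpleGraph V) {t : ℕ}
    (ht : 1 ≤ t) (hV : Fintype.card V ≤ 3 * t) :
    ∃ c : Sym2 V → Bool,
      (¬ ∃ f : pathGraph 4 ↪g F, ∀ a b, (pathGraph 4).Adj a b → c s(f a, f b) = true) ∧
      (¬ ∃ f : Copies t K2 ↪g F, ∀ a b, (Copies t K2).Adj a b → c s(f a, f b) = false) := by
  classical
  obtain ⟨c, hc⟩ := exists_isGoodColouring F univ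
  exact ⟨c, hc.not_exists_red_pathGraph, hc.not_exists_blue_copies_K2 ht hV⟩

end Fintype

end SimpleGraph

variable {α α' β γ : Type*}

def SimpleGraph.Copies.embedding {t : ℕ} (G : SimpleGraph β) (i : Fin t) :
    G ↪g Copies t G where
  toFun x := (i, x)
  inj' _ _ h := congrArg Prod.snd h
  map_rel_iff' := ⟨And.right, fun h => ⟨rfl, h⟩⟩

def SimpleGraph.Copies.map {t : ℕ} {G : SimpleGraph β} {H : SimpleGraph γ}
    (f : Fin t → H ↪g G) : Copies t H ↪g Copies t G where
  toFun x := (x.1, f x.1 x.2)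
  inj' := by
    rintro ⟨i, x⟩ ⟨j, y⟩ h
    simp only [Prod.mk.injEq] at h
    obtain ⟨rfl, h⟩ := h
    rw [(f i).injective h]
  map_rel_iff' {x y} := by
    obtain ⟨i, x⟩ := x
    obtain ⟨j, y⟩ := y
    refine ⟨fun ⟨hij, h⟩ => ?_, fun ⟨hij, h⟩ => ?_⟩ <;> obtain rfl : i = j := hij
    exacts [⟨rfl, (f i).map_rel_iff.mp h⟩, ⟨rfl, (f i).map_rel_iff.mpr h⟩]

def K2.embeddingOfAdj {G : SimpleGraph β} {a b : β} (hab : G.Adj a b) : K2 ↪g G where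
  toFun := ![a, b]
  inj' i j h := by
    fin_cases i <;> fin_cases j <;> simp_all [hab.ne, hab.ne']
  map_rel_iff' {i j} := by
    change G.Adj (![a, b] i) (![a, b] j) ↔ K2.Adj i j
    fin_cases i <;> fin_cases j <;> simp [K2, hab, hab.symm]

theorem StronglyArrows.of_iso {F : SimpleGraph α} {F' : SimpleGraph α'} {G : SimpleGraph β}
    {H : SimpleGraph γ} (e : F ≃g F') (h : StronglyArrows F G H) : StronglyArrows F' G H := by
  intro c
  rcases h (c ∘ Sym2.map e) with ⟨f, hf⟩ | ⟨f, hf⟩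
  exacts [.inl ⟨e.toEmbedding.comp f, hf⟩, .inr ⟨e.toEmbedding.comp f, hf⟩]

theorem stronglyArrows_copies (G : SimpleGraph β) (t : ℕ) :
    StronglyArrows (Copies t G) G (Copies t K2) := by
  intro c
  by_cases hred : ∃ i, ∀ a b, G.Adj a b → c s((i, a), (i, b)) = true
  · obtain ⟨i, hi⟩ := hred
    exact .inl ⟨Copies.embedding G i, hi⟩
  push Not at hred
  choose a b hab hblue using hred
  refine .inr ⟨Copies.map fun i => K2.embeddingOfAdj (hab i), ?_⟩
  rintro ⟨i, k⟩ ⟨j, l⟩ ⟨rfl, hkl⟩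
  change c s((i, ![a i, b i] k), (i, ![a i, b i] l)) = false
  fin_cases k <;> fin_cases l
  · exact absurd hkl (by simp [K2])
  · simpa using hblue i
  · simpa [Sym2.eq_swap (a := (i, b i))] using hblue i
  · exact absurd hkl (by simp [K2])

theorem exists_stronglyArrows_fin (G : SimpleGraph β) [Fintype β] (t : ℕ) :
    ∃ n, ∃ F : SimpleGraph (Fin n), StronglyArrows F G (Copies t K2) :=
  ⟨_, _, (stronglyArrows_copies G t).of_iso (overFinIso _ rfl)⟩

theorem stmt12 (t : ℕ) (ht : 1 ≤ t) :
    (∀ F : SimpleGraph (Fin (3 * t)), ∃ c : Sym2 (Fin (3 * t)) → Bool,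
      (¬ ∃ f : SimpleGraph.pathGraph 4 ↪g F,
        ∀ a b, (SimpleGraph.pathGraph 4).Adj a b → c s(f a, f b) = true) ∧
      (¬ ∃ f : SimpleGraph.Copies t K2 ↪g F,
        ∀ a b, (SimpleGraph.Copies t K2).Adj a b → c s(f a, f b) = false)) ∧
    3 * t + 1 ≤ IR (SimpleGraph.pathGraph 4) (SimpleGraph.Copies t K2) := by
  refine ⟨fun F => exists_colouring_not_red_pathGraph_not_blue_copies_K2 F ht (by simp), ?_⟩
  refine le_csInf (exists_stronglyArrows_fin _ t) fun n ⟨F, hF⟩ => ?_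
  by_contra! hn
  obtain ⟨c, hred, hblue⟩ :=
    exists_colouring_not_red_pathGraph_not_blue_copies_K2 F ht (by simp; omega)
  exact (hF c).elim hred hblue
end

section
/- For integers n ≥ 5 and t ≥ 1, IR(P_n, tK_2) ≤ ⌈t/2⌉·n + t − rem(t,2), where rem(t,2) is the remainder of t modulo 2. -/
open SimpleGraph

/-!
Every red-blue colouring of the cycle `C_{n+2}`, `n ≥ 5`, contains a red induced `P_n` or a blue
induced `2K_2`: two blue edges at cyclic distance at least `3` in both directions induce a `2K_2`;
otherwise all blue edges lie among three consecutive edges, and the remaining `n` vertices induce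
a red path. Strong arrowing is additive under disjoint union (a colouring of `F₁ ⊕ F₂` either has
a red `G` in one part or blue targets in both), so `⌊t/2⌋` copies of `C_{n+2}`, together with a
`P_n` (which arrows `(P_n, K_2)`) when `t` is odd, strongly arrow `(P_n, tK_2)`.
-/

def SimpleGraph.copiesAddIso {β : Type*} (a b : ℕ) (H : SimpleGraph β) :
    Copies (a + b) H ≃g Copies a H ⊕g Copies b H where
  toEquiv :=
    (Equiv.prodCongr finSumFinEquiv.symm (Equiv.refl β)).trans (Equiv.sumProdDistrib _ _ β)
  map_rel_iff' := by
    rintro ⟨i, x⟩ ⟨j, y⟩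
    obtain ⟨i, rfl⟩ := finSumFinEquiv.surjective i
    obtain ⟨j, rfl⟩ := finSumFinEquiv.surjective j
    rcases i with i | i <;> rcases j with j | j <;>
      simp [Copies, Equiv.sumProdDistrib, Fin.ext_iff] <;> omega

def SimpleGraph.copiesOneIso {β : Type*} (H : SimpleGraph β) : Copies 1 H ≃g H where
  toEquiv := Equiv.uniqueProd β (Fin 1)
  map_rel_iff' := by
    rintro ⟨i, x⟩ ⟨j, y⟩
    simp [Copies, Subsingleton.elim i j]

def SimpleGraph.copiesSuccIso {β : Type*} (s : ℕ) (H : SimpleGraph β) :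
    Copies (s + 1) H ≃g Copies s H ⊕g H :=
  (copiesAddIso s 1 H).trans (Iso.sumCongr .refl (copiesOneIso H))

namespace StronglyArrows

variable {α α' β γ γ' : Type*} {F : SimpleGraph α} {F' : SimpleGraph α'} {G : SimpleGraph β}
  {H : SimpleGraph γ} {H' : SimpleGraph γ'}

theorem of_embedding_host (h : StronglyArrows F G H) (e : F ↪g F') : StronglyArrows F' G H := by
  intro c
  rcases h (fun p => c (p.map e)) with ⟨f, hf⟩ | ⟨f, hf⟩
  · exact Or.inl ⟨e.comp f, hf⟩
  · exact Or.inr ⟨e.comp f, hf⟩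

theorem of_embedding_blue (h : StronglyArrows F G H) (e : H' ↪g H) : StronglyArrows F G H' :=
  fun c => (h c).imp_right fun ⟨f, hf⟩ =>
    ⟨f.comp e, fun a b hab => hf (e a) (e b) (e.map_adj_iff.2 hab)⟩

theorem sum (h₁ : StronglyArrows F G H) (h₂ : StronglyArrows F' G H') :
    StronglyArrows (F ⊕g F') G (H ⊕g H') := by
  intro c
  rcases h₁ (fun p => c (p.map Sum.inl)) with ⟨f, hf⟩ | ⟨f₁, hf₁⟩
  · exact Or.inl ⟨Embedding.sumInl.comp f, hf⟩
  rcases h₂ (fun p => c (p.map Sum.inr)) with ⟨f, hf⟩ | ⟨f₂, hf₂⟩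
  · exact Or.inl ⟨Embedding.sumInr.comp f, hf⟩
  refine Or.inr ⟨f₁.sum f₂, ?_⟩
  rintro (a | a) (b | b) hab
  · exact hf₁ a b hab
  · exact absurd hab (not_adj_sum_inl_inr a b)
  · exact absurd hab.symm (not_adj_sum_inl_inr b a)
  · exact hf₂ a b hab

theorem copies_zero : StronglyArrows F G (Copies 0 H) :=
  fun _ => Or.inr ⟨RelEmbedding.ofIsEmpty _ _, fun a => isEmptyElim a⟩

theorem self_K2 : StronglyArrows F F K2 := by
  intro c
  by_cases hred : ∀ a b, F.Adj a b → c s(a, b) = true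
  · exact Or.inl ⟨Embedding.refl, hred⟩
  push Not at hred
  obtain ⟨a, b, hab, hblue⟩ := hred
  refine Or.inr ⟨⟨⟨![a, b], ?_⟩, ?_⟩, ?_⟩
  · intro i j
    fin_cases i <;> fin_cases j <;> simp [hab.ne, hab.ne.symm]
  · intro i j
    show F.Adj (![a, b] i) (![a, b] j) ↔ K2.Adj i j
    fin_cases i <;> fin_cases j <;> simp [K2, hab, hab.symm]
  · intro i j hij
    show c s(![a, b] i, ![a, b] j) = false
    fin_cases i <;> fin_cases j <;> simp_all [K2, Sym2.eq_swap]

theorem copies {k : ℕ} (h : StronglyArrows F G (Copies k H)) (s : ℕ) :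
    StronglyArrows (Copies s F) G (Copies (k * s) H) := by
  induction s with
  | zero => exact copies_zero
  | succ s ih =>
    exact ((ih.sum h).of_embedding_blue (copiesAddIso (k * s) k H).toEmbedding).of_embedding_host
      (copiesSuccIso s F).symm.toRelEmbedding

end StronglyArrows

theorem IR_le_card {α β γ : Type*} [Fintype α] {F : SimpleGraph α} {G : SimpleGraph β}
    {H : SimpleGraph γ} (h : StronglyArrows F G H) : IR G H ≤ Fintype.card α :=
  Nat.sInf_le ⟨_, h.of_embedding_host (Iso.map (Fintype.equivFin α) F).toEmbedding⟩

theorem Fin.val_sub_eq_ite {N : ℕ} (a b : Fin N) :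
    (a - b).val = if b.val ≤ a.val then a.val - b.val else N + a.val - b.val := by
  split_ifs with h
  · exact Fin.sub_val_of_le h
  · exact Fin.coe_sub_iff_lt.2 (by omega)

theorem Fin.exists_window_of_pairwise_near {n : ℕ} (hn : 5 ≤ n) (B : Fin (n + 2) → Prop)
    (hB : ∀ i j, B i → B j → 3 ≤ (j - i).val → n + 2 < (j - i).val + 3) :
    ∃ k, ∀ j, B j → (j - k).val ≤ 2 := by
  by_cases hne : ∃ i, B i
  swap
  · push Not at hne
    exact ⟨0, fun j hj => absurd hj (hne j)⟩
  obtain ⟨i, hi⟩ := hne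
  classical
  -- `k` is the earliest element of `B` at most two steps before `i`.
  obtain ⟨k, hk, hmax⟩ := Finset.exists_max_image
    (Finset.univ.filter fun k => B k ∧ (i - k).val ≤ 2) (fun k => (i - k).val) ⟨i, by simp [hi]⟩
  simp only [Finset.mem_filter, Finset.mem_univ, true_and] at hk
  refine ⟨k, fun j hj => ?_⟩
  have hij := hB j i hj hi
  have hkj := hB k j hk.1 hj
  have hmaxj : (i - j).val ≤ 2 → (i - j).val ≤ (i - k).val := fun h => hmax j (by simp [hj, h])
  clear hmax hB
  obtain ⟨-, hik⟩ := hk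
  simp only [Fin.val_sub_eq_ite] at *
  split_ifs at * <;> omega

section CycleGraph

variable {n : ℕ}

open scoped Fin.NatCast

theorem SimpleGraph.cycleGraph_adj_add_natCast (k : Fin (n + 2)) {u v : ℕ} (hu : u ≤ n)
    (hv : v ≤ n) : (cycleGraph (n + 2)).Adj (k + u) (k + v) ↔ u = v + 1 ∨ v = u + 1 := by
  rw [cycleGraph_adj', add_sub_add_left_eq_sub, add_sub_add_left_eq_sub, Fin.val_sub_eq_ite,
    Fin.val_sub_eq_ite, Fin.val_cast_of_lt (by omega), Fin.val_cast_of_lt (by omega)]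
  split_ifs <;> omega

theorem Fin.add_natCast_inj (k : Fin (n + 2)) {u v : ℕ} (hu : u < n + 2) (hv : v < n + 2) :
    k + (u : Fin (n + 2)) = k + v ↔ u = v := by
  rw [add_right_inj, Fin.ext_iff, Fin.val_cast_of_lt hu, Fin.val_cast_of_lt hv]

def SimpleGraph.cycleGraph.pathEmbedding {m : ℕ} (k : Fin (n + 2)) (hm : m ≤ n + 1) :
    pathGraph m ↪g cycleGraph (n + 2) where
  toFun a := k + (a.val : Fin (n + 2))
  inj' := by
    intro a b hab
    exact Fin.ext <| (Fin.add_natCast_inj k (by omega) (by omega)).1 hab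
  map_rel_iff' {a b} := by
    change (cycleGraph (n + 2)).Adj (k + (a.val : Fin (n + 2))) (k + b.val) ↔ _
    rw [cycleGraph_adj_add_natCast k (by omega) (by omega), pathGraph_adj]
    omega

-- The two edges of `2K_2` go to `{i, i + 1}` and `{j, j + 1}`.
def SimpleGraph.cycleGraph.twoK2Embedding (i j : Fin (n + 2)) (h3 : 3 ≤ (j - i).val)
    (hjn : (j - i).val + 3 ≤ n + 2) : twoK2 ↪g cycleGraph (n + 2) where
  toFun p := i + ((p.1.val * (j - i).val + p.2.val : ℕ) : Fin (n + 2))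
  inj' := by
    rintro ⟨a, b⟩ ⟨a', b'⟩ h
    have ha := Nat.mul_le_mul_right (j - i).val (Nat.le_of_lt_succ a.isLt)
    have ha' := Nat.mul_le_mul_right (j - i).val (Nat.le_of_lt_succ a'.isLt)
    dsimp only at h
    rw [Fin.add_natCast_inj i (by omega) (by omega)] at h
    fin_cases a <;> fin_cases a' <;> fin_cases b <;> fin_cases b' <;> simp_all <;> omega
  map_rel_iff' {p q} := by
    obtain ⟨a, b⟩ := p
    obtain ⟨a', b'⟩ := q
    have ha := Nat.mul_le_mul_right (j - i).val (Nat.le_of_lt_succ a.isLt)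
    have ha' := Nat.mul_le_mul_right (j - i).val (Nat.le_of_lt_succ a'.isLt)
    change (cycleGraph (n + 2)).Adj (i + ((a.val * (j - i).val + b.val : ℕ) : Fin (n + 2)))
      (i + ((a'.val * (j - i).val + b'.val : ℕ) : Fin (n + 2))) ↔ _
    rw [cycleGraph_adj_add_natCast i (by omega) (by omega)]
    clear ha ha'
    fin_cases a <;> fin_cases a' <;> simp [twoK2, Copies, K2, Fin.ext_iff] <;> omega

theorem SimpleGraph.cycleGraph_stronglyArrows_pathGraph_twoK2 (hn : 5 ≤ n) :
    StronglyArrows (cycleGraph (n + 2)) (pathGraph n) twoK2 := by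
  intro c
  by_cases hfar : ∃ i j : Fin (n + 2), c s(i, i + 1) = false ∧ c s(j, j + 1) = false ∧
      3 ≤ (j - i).val ∧ (j - i).val + 3 ≤ n + 2
  · obtain ⟨i, j, hi, hj, h3, hjn⟩ := hfar
    refine Or.inr ⟨cycleGraph.twoK2Embedding i j h3 hjn, ?_⟩
    have hj1 : i + (j - i + 1) = j + 1 := by abel
    rintro ⟨a, b⟩ ⟨a', b'⟩ ⟨rfl, hbb'⟩
    fin_cases a <;> fin_cases b <;> fin_cases b' <;>
      simp_all [cycleGraph.twoK2Embedding, K2, Sym2.eq_swap]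
  · push Not at hfar
    obtain ⟨k, hk⟩ :=
      Fin.exists_window_of_pairwise_near hn (fun j => c s(j, j + 1) = false) hfar
    -- The path `k + 3, …, k + n + 2 = k` avoids the edges `k, k + 1, k + 2` that may be blue.
    have hred : ∀ a : ℕ, a + 1 < n → c s(k + 3 + a, k + 3 + a + 1) = true := by
      intro a ha
      by_contra hblue
      have hoffset : k + 3 + a - k = ((3 + a : ℕ) : Fin (n + 2)) := by push_cast; abel
      have hwindow := hk _ (by simpa using hblue)
      rw [hoffset, Fin.val_cast_of_lt (by omega)] at hwindow
      omega
    refine Or.inl ⟨cycleGraph.pathEmbedding (k + 3) (m := n) (by omega), ?_⟩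
    intro a b hab
    rw [pathGraph_adj] at hab
    rcases hab with h | h
    · simpa [cycleGraph.pathEmbedding, ← h, add_assoc] using hred a.val (by omega)
    · simpa [cycleGraph.pathEmbedding, ← h, add_assoc, Sym2.eq_swap] using hred b.val (by omega)

end CycleGraph

theorem stmt13_general (n t : ℕ) (hn : 5 ≤ n) :
    IR (SimpleGraph.pathGraph n) (SimpleGraph.Copies t K2) ≤
      ((t + 1) / 2) * n + t - t % 2 := by
  have hcycles := (cycleGraph_stronglyArrows_pathGraph_twoK2 hn).copies
  obtain ⟨s, rfl | rfl⟩ := Nat.even_or_odd' t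
  · calc IR (pathGraph n) (Copies (2 * s) K2) ≤ Fintype.card (Fin s × Fin (n + 2)) :=
          IR_le_card (hcycles s)
      _ = _ := by
        rw [Fintype.card_prod, Fintype.card_fin, Fintype.card_fin,
          show (2 * s + 1) / 2 = s by omega, Nat.mul_add]
        omega
  · have harrows := ((hcycles s).sum StronglyArrows.self_K2).of_embedding_blue
      (copiesSuccIso (2 * s) K2).toEmbedding
    calc IR (pathGraph n) (Copies (2 * s + 1) K2)
        ≤ Fintype.card ((Fin s × Fin (n + 2)) ⊕ Fin n) := IR_le_card harrows
      _ = _ := by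
        rw [Fintype.card_sum, Fintype.card_prod, Fintype.card_fin, Fintype.card_fin,
          Fintype.card_fin, show (2 * s + 1 + 1) / 2 = s + 1 by omega]
        ring_nf
        omega

theorem stmt13 (n t : ℕ) (hn : 5 ≤ n) (ht : 1 ≤ t) :
    IR (SimpleGraph.pathGraph n) (SimpleGraph.Copies t K2) ≤
      ((t + 1) / 2) * n + t - t % 2 :=
  stmt13_general n t hn
end
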